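/- arXiv:2411.13124 — 4 statements merged into one kernel-verified Lean document; each statement's English description precedes it below -/
import Mathlib

section
/- Let G be a finite group, H, J ≤ G subgroups, and R a commutative ring. There is an isomorphism of R-modules from R[H\G/J] (the free R-module on double cosets) to Hom_{R[G]}(R[G/H], R[G/J]), sending a double coset HgJ to the unique R[G]-module homomorphism φ with φ(1·H) = Σ_{γJ ∈ G/J, HγJ = HgJ} γJ. -/
open scoped Classical

/-- The `R`-submodule of `G`-equivariant `R`-linear maps between two representations,
i.e. morphisms of `R[G]`-modules. -/
def eqvHom {R : Type} [CommRing R] {G : Type} [Group G]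
    {V W : Type} [AddCommGroup V] [Module R V] [AddCommGroup W] [Module R W]
    (ρ : Representation R G V) (σ : Representation R G W) : Submodule R (V →ₗ[R] W) where
  carrier := {f | ∀ g : G, f ∘ₗ ρ g = σ g ∘ₗ f}
  add_mem' := by
    intro a b ha hb g
    simp only [LinearMap.add_comp, LinearMap.comp_add, ha g, hb g]
  zero_mem' := by
    intro g
    simp
  smul_mem' := by
    intro c f hf g
    simp only [LinearMap.smul_comp, LinearMap.comp_smul, hf g]

/-- The permutation representation on `H →₀ k` induced by a `G`-action on `H`
(the meaning `Representation.ofMulAction` had in the older Mathlib). -/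
noncomputable def ofMulActionFinsupp (k : Type*) [Semiring k] (G : Type*) [Monoid G] (H : Type*)
    [MulAction G H] : Representation k G (H →₀ k) where
  toFun g := Finsupp.lmapDomain k k (g • ·)
  map_one' := by ext; simp
  map_mul' x y := by ext; simp [mul_smul]

lemma ofMulActionFinsupp_single {k : Type*} [Semiring k] {G : Type*} [Group G] {H : Type*}
    [MulAction G H] (g : G) (x : H) (r : k) :
    ofMulActionFinsupp k G H g (Finsupp.single x r) = Finsupp.single (g • x) r := by
  change Finsupp.mapDomain (g • ·) (Finsupp.single x r) = _
  exact Finsupp.mapDomain_single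

lemma ofMulActionFinsupp_apply {k : Type*} [Semiring k] {G : Type*} [Group G] {H : Type*}
    [MulAction G H] (g : G) (f : H →₀ k) (x : H) :
    ofMulActionFinsupp k G H g f x = f (g⁻¹ • x) := by
  change Finsupp.mapDomain (g • ·) f x = _
  conv_lhs => rw [← smul_inv_smul g x]
  exact Finsupp.mapDomain_apply (MulAction.injective g) f _

section Aux
variable {G : Type} [Group G] (H J : Subgroup G)

lemma doset_mk_congr {a a' b b' : G} (ha : (a : G ⧸ H) = (a' : G ⧸ H))
    (hb : (b : G ⧸ J) = (b' : G ⧸ J)) :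
    DoubleCoset.mk H J (a⁻¹ * b) = DoubleCoset.mk H J (a'⁻¹ * b') := by
  rw [QuotientGroup.eq] at ha hb
  rw [DoubleCoset.eq]
  exact ⟨(a⁻¹ * a')⁻¹, H.inv_mem ha, b⁻¹ * b', hb, by group⟩

lemma smul_mk_out (K : Subgroup G) (g : G) (c : G ⧸ K) :
    g • c = ((g * Quotient.out c : G) : G ⧸ K) := by
  conv_lhs => rw [← QuotientGroup.out_eq' c]
  rfl

lemma doset_mk_out (c : G ⧸ H) (y : G ⧸ J) (a b : G) (ha : c = (a : G ⧸ H))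
    (hb : y = (b : G ⧸ J)) :
    DoubleCoset.mk H J ((Quotient.out c)⁻¹ * Quotient.out y) = DoubleCoset.mk H J (a⁻¹ * b) := by
  apply doset_mk_congr
  · rw [QuotientGroup.out_eq', ha]
  · rw [QuotientGroup.out_eq', hb]

end Aux

section Aux2
variable {R : Type} [CommRing R] {G : Type} [Group G] [Finite G] (H J : Subgroup G)

noncomputable def TT (d : DoubleCoset.Quotient (H : Set G) (J : Set G)) (c : G ⧸ H) :
    (G ⧸ J) →₀ R :=
  Finsupp.equivFunOnFinite.symm
    (fun y => if DoubleCoset.mk H J ((Quotient.out c)⁻¹ * Quotient.out y) = d then (1 : R) else 0)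

lemma TT_apply (d : DoubleCoset.Quotient (H : Set G) (J : Set G)) (c : G ⧸ H) (y : G ⧸ J) :
    TT (R := R) H J d c y =
      if DoubleCoset.mk H J ((Quotient.out c)⁻¹ * Quotient.out y) = d then (1 : R) else 0 := rfl

/-- the forward map, valued in plain linear maps -/
noncomputable def Phi0 : (DoubleCoset.Quotient (H : Set G) (J : Set G) →₀ R) →ₗ[R]
    (((G ⧸ H) →₀ R) →ₗ[R] ((G ⧸ J) →₀ R)) :=
  Finsupp.lift _ R _ (fun d => Finsupp.lift _ R _ (TT H J d))

lemma Phi0_single_single (d : DoubleCoset.Quotient (H : Set G) (J : Set G)) (c : G ⧸ H) :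
    Phi0 H J (Finsupp.single d (1 : R)) (Finsupp.single c 1) = TT H J d c := by
  simp [Phi0]

lemma TT_mem : ∀ d, Finsupp.lift ((G ⧸ J) →₀ R) R (G ⧸ H) (TT H J d) ∈
    eqvHom (ofMulActionFinsupp R G (G ⧸ H)) (ofMulActionFinsupp R G (G ⧸ J)) := by
  intro d g
  apply Finsupp.lhom_ext
  intro c r
  apply Finsupp.ext
  intro y
  simp only [LinearMap.comp_apply, ofMulActionFinsupp_single]
  rw [ofMulActionFinsupp_apply]
  simp only [Finsupp.lift_apply, Finsupp.sum_single_index, zero_smul, Finsupp.coe_smul,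
    Pi.smul_apply, smul_eq_mul]
  rw [TT_apply, TT_apply]
  congr 1
  rw [doset_mk_out H J (g • c) y (g * Quotient.out c) (Quotient.out y)
    (smul_mk_out H g c) (QuotientGroup.out_eq' y).symm,
    doset_mk_out H J c (g⁻¹ • y) (Quotient.out c) (g⁻¹ * Quotient.out y)
    (QuotientGroup.out_eq' c).symm
    (smul_mk_out J g⁻¹ y)]
  rw [mul_inv_rev, mul_assoc]

lemma Phi0_mem (v : DoubleCoset.Quotient (H : Set G) (J : Set G) →₀ R) :
    Phi0 H J v ∈
    eqvHom (ofMulActionFinsupp R G (G ⧸ H)) (ofMulActionFinsupp R G (G ⧸ J)) := by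
  induction v using Finsupp.induction_linear with
  | zero => simp
  | add a b ha hb => rw [map_add]; exact Submodule.add_mem _ ha hb
  | single d r =>
    have : Finsupp.single d r = r • Finsupp.single d (1:R) := by simp
    rw [this, map_smul]
    refine Submodule.smul_mem _ r ?_
    have : Phi0 H J (Finsupp.single d (1:R)) = Finsupp.lift ((G ⧸ J) →₀ R) R (G ⧸ H) (TT H J d) := by
      simp [Phi0]
    rw [this]
    exact TT_mem H J d

end Aux2

section Aux3
variable {R : Type} [CommRing R] {G : Type} [Group G] [Finite G] (H J : Subgroup G)

instance : Finite (DoubleCoset.Quotient (H : Set G) (J : Set G)) :=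
  Quotient.finite _

noncomputable def Psi :
    (eqvHom (ofMulActionFinsupp R G (G ⧸ H)) (ofMulActionFinsupp R G (G ⧸ J)))
      →ₗ[R] (DoubleCoset.Quotient (H : Set G) (J : Set G) →₀ R) where
  toFun f := Finsupp.equivFunOnFinite.symm
    (fun d => ((f : ((G ⧸ H) →₀ R) →ₗ[R] ((G ⧸ J) →₀ R))
        (Finsupp.single ((1 : G) : G ⧸ H) 1)) ((Quotient.out d : G) : G ⧸ J))
  map_add' f g := by ext d; simp
  map_smul' r f := by ext d; simp

lemma Psi_apply (f) (d : DoubleCoset.Quotient (H : Set G) (J : Set G)) :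
    Psi H J f d = ((f : ((G ⧸ H) →₀ R) →ₗ[R] ((G ⧸ J) →₀ R))
      (Finsupp.single ((1 : G) : G ⧸ H) 1)) ((Quotient.out d : G) : G ⧸ J) := rfl

lemma Phi0_apply_single_one (v : DoubleCoset.Quotient (H : Set G) (J : Set G) →₀ R)
    (c : G ⧸ H) (y : G ⧸ J) :
    (Phi0 H J v (Finsupp.single c 1)) y =
      v (DoubleCoset.mk H J ((Quotient.out c)⁻¹ * Quotient.out y)) := by
  induction v using Finsupp.induction_linear with
  | zero => simp
  | add a b ha hb => simp [map_add, ha, hb]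
  | single d r =>
    simp only [Phi0, Finsupp.lift_apply, Finsupp.sum_single_index, zero_smul,
      LinearMap.smul_apply, Finsupp.coe_smul, Pi.smul_apply, smul_eq_mul,
      Finsupp.single_apply]
    rw [TT_apply]
    simp [eq_comm, mul_ite]

lemma f0_inv (f : ((G ⧸ H) →₀ R) →ₗ[R] ((G ⧸ J) →₀ R))
    (hf : f ∈ eqvHom (ofMulActionFinsupp R G (G ⧸ H))
      (ofMulActionFinsupp R G (G ⧸ J)))
    (h : G) (hh : h ∈ H) (z : G ⧸ J) :
    f (Finsupp.single ((1 : G) : G ⧸ H) 1) (h • z) =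
      f (Finsupp.single ((1 : G) : G ⧸ H) 1) z := by
  have h1 : (ofMulActionFinsupp R G (G ⧸ H)) h
      (Finsupp.single ((1 : G) : G ⧸ H) 1) = Finsupp.single ((1 : G) : G ⧸ H) (1 : R) := by
    rw [ofMulActionFinsupp_single]
    congr 1
    rw [smul_mk_out H h ((1 : G) : G ⧸ H)]
    rw [QuotientGroup.eq]
    have ho : Quotient.out ((1 : G) : G ⧸ H) ∈ H := by
      have h4 : ((Quotient.out ((1 : G) : G ⧸ H) : G) : G ⧸ H) = ((1 : G) : G ⧸ H) :=
        QuotientGroup.out_eq' _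
      have := QuotientGroup.eq.mp h4
      simpa using H.inv_mem this
    simpa [mul_inv_rev] using H.mul_mem (H.inv_mem ho) (H.inv_mem hh)
  have h2 := hf h
  have h3 := congrArg (fun φ => φ (Finsupp.single ((1 : G) : G ⧸ H) (1 : R))) h2
  simp only [LinearMap.comp_apply, h1] at h3
  calc f (Finsupp.single ((1 : G) : G ⧸ H) 1) (h • z)
      = ((ofMulActionFinsupp R G (G ⧸ J)) h
          (f (Finsupp.single ((1 : G) : G ⧸ H) 1))) (h • z) := by rw [← h3]
    _ = f (Finsupp.single ((1 : G) : G ⧸ H) 1) (h⁻¹ • h • z) := by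
        rw [ofMulActionFinsupp_apply]
    _ = _ := by rw [inv_smul_smul]

lemma f0_doset_out (f : ((G ⧸ H) →₀ R) →ₗ[R] ((G ⧸ J) →₀ R))
    (hf : f ∈ eqvHom (ofMulActionFinsupp R G (G ⧸ H))
      (ofMulActionFinsupp R G (G ⧸ J))) (z : G) :
    f (Finsupp.single ((1 : G) : G ⧸ H) 1)
        ((Quotient.out (DoubleCoset.mk H J z) : G) : G ⧸ J) =
      f (Finsupp.single ((1 : G) : G ⧸ H) 1) ((z : G ⧸ J)) := by
  obtain ⟨h, k, hh, hk, heq⟩ := DoubleCoset.mk_out_eq_mul H J z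
  rw [heq]
  have : ((h * z * k : G) : G ⧸ J) = h • ((z : G) : G ⧸ J) := by
    have : ((h * z * k : G) : G ⧸ J) = ((h * z : G) : G ⧸ J) := by
      rw [QuotientGroup.eq]
      have hterm : (h * z * k)⁻¹ * (h * z) = k⁻¹ := by group
      rw [hterm]
      exact J.inv_mem hk
    rw [this]; rfl
  rw [this, f0_inv H J f hf h hh]

lemma eqvHom_ext (f g : ((G ⧸ H) →₀ R) →ₗ[R] ((G ⧸ J) →₀ R))
    (hf : f ∈ eqvHom (ofMulActionFinsupp R G (G ⧸ H))
      (ofMulActionFinsupp R G (G ⧸ J)))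
    (hg : g ∈ eqvHom (ofMulActionFinsupp R G (G ⧸ H))
      (ofMulActionFinsupp R G (G ⧸ J)))
    (hval : f (Finsupp.single ((1 : G) : G ⧸ H) 1) =
      g (Finsupp.single ((1 : G) : G ⧸ H) 1)) : f = g := by
  apply Finsupp.lhom_ext
  intro c r
  have hsingle : (ofMulActionFinsupp R G (G ⧸ H)) (Quotient.out c)
      (Finsupp.single ((1 : G) : G ⧸ H) (1 : R)) = Finsupp.single c 1 := by
    rw [ofMulActionFinsupp_single]
    congr 1
    rw [smul_mk_out H (Quotient.out c) ((1 : G) : G ⧸ H)]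
    have h1 : ((Quotient.out ((1 : G) : G ⧸ H) : G) : G ⧸ H) = ((1 : G) : G ⧸ H) :=
      QuotientGroup.out_eq' _
    calc ((Quotient.out c * Quotient.out ((1 : G) : G ⧸ H) : G) : G ⧸ H)
        = Quotient.out c • ((Quotient.out ((1 : G) : G ⧸ H) : G) : G ⧸ H) := rfl
      _ = Quotient.out c • ((1 : G) : G ⧸ H) := by rw [h1]
      _ = ((Quotient.out c * 1 : G) : G ⧸ H) := rfl
      _ = c := by rw [mul_one]; exact QuotientGroup.out_eq' c
  have : Finsupp.single c r = r • Finsupp.single c (1 : R) := by simp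
  rw [this, map_smul, map_smul, ← hsingle, ← LinearMap.comp_apply, ← LinearMap.comp_apply,
    hf (Quotient.out c), hg (Quotient.out c)]
  simp [hval]

end Aux3


/-- for a finite group `G`, subgroups `H, J ≤ G` and a commutative ring `R`,
there is an isomorphism of `R`-modules from `R[H\G/J]` to `Hom_{R[G]}(R[G/H], R[G/J])`,
sending a double coset `HgJ` to the unique morphism `φ` with
`φ(1·H) = Σ_{γJ ∈ G/J, HγJ = HgJ} γJ`. -/
theorem statement1 (R : Type) [CommRing R] (G : Type) [Group G] [Finite G]
    (H J : Subgroup G) :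
    ∃ e : (DoubleCoset.Quotient (H : Set G) (J : Set G) →₀ R) ≃ₗ[R]
        eqvHom (ofMulActionFinsupp R G (G ⧸ H)) (ofMulActionFinsupp R G (G ⧸ J)),
      ∀ g : G,
        ((e (Finsupp.single (DoubleCoset.mk H J g) 1) : ((G ⧸ H) →₀ R) →ₗ[R] ((G ⧸ J) →₀ R))
            (Finsupp.single ((1 : G) : G ⧸ H) 1)) =
          ∑ᶠ (x : G ⧸ J) (_ : DoubleCoset.mk H J (Quotient.out x) = DoubleCoset.mk H J g),
            Finsupp.single x (1 : R) := by
  have key : ∀ (v : DoubleCoset.Quotient (H : Set G) (J : Set G) →₀ R) (y : G ⧸ J),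
      (Phi0 H J v (Finsupp.single ((1 : G) : G ⧸ H) 1)) y = v (DoubleCoset.mk H J (Quotient.out y)) := by
    intro v y
    rw [Phi0_apply_single_one]
    congr 1
    rw [doset_mk_out H J ((1 : G) : G ⧸ H) y 1 (Quotient.out y) rfl
      (QuotientGroup.out_eq' y).symm]
    simp
  refine ⟨LinearEquiv.ofLinear
      (LinearMap.codRestrict _ (Phi0 H J) (Phi0_mem H J)) (Psi H J) ?_ ?_, ?_⟩
  · -- Phi ∘ Psi = id
    apply LinearMap.ext
    intro f
    apply Subtype.ext
    simp only [LinearMap.comp_apply, LinearMap.codRestrict_apply, LinearMap.id_apply]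
    apply eqvHom_ext H J _ _ (Phi0_mem H J _) f.2
    apply Finsupp.ext
    intro y
    rw [key]
    rw [Psi_apply]
    rw [f0_doset_out H J _ f.2]
    congr 1
    exact QuotientGroup.out_eq' y
  · -- Psi ∘ Phi = id
    apply Finsupp.lhom_ext
    intro d b
    simp only [LinearMap.comp_apply, LinearMap.codRestrict_apply, LinearMap.id_apply]
    apply Finsupp.ext
    intro d'
    rw [Psi_apply, LinearMap.codRestrict_apply, key]
    have hmk : DoubleCoset.mk H J (Quotient.out ((Quotient.out d' : G) : G ⧸ J)) = d' := by
      have hw : ((Quotient.out ((Quotient.out d' : G) : G ⧸ J) : G) : G ⧸ J)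
          = ((Quotient.out d' : G) : G ⧸ J) := QuotientGroup.out_eq' _
      have hj := QuotientGroup.eq.mp hw
      conv_rhs => rw [← DoubleCoset.out_eq' H J d']
      rw [DoubleCoset.eq]
      exact ⟨1, H.one_mem, _, hj, by group⟩
    rw [hmk]
  · intro g
    apply Finsupp.ext
    intro y
    rw [LinearEquiv.ofLinear_apply, LinearMap.codRestrict_apply, key]
    haveI := Fintype.ofFinite (G ⧸ J)
    rw [finsum_eq_sum_of_fintype, Finsupp.finset_sum_apply]
    simp only [finsum_eq_if]
    rw [Finset.sum_eq_single y
      (fun x _ hxy => by simp [Finsupp.single_apply, hxy, apply_ite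
        (fun (v : (G ⧸ J) →₀ R) => v y)])
      (fun hy => absurd (Finset.mem_univ y) hy)]
    simp [Finsupp.single_apply, apply_ite (fun (v : (G ⧸ J) →₀ R) => v y), eq_comm]
end

section
/- Let G be a finite group, H ≤ G, and 𝒥 = {J₁, …, J_ℓ} a set of nontrivial subgroups of G. The norm element N_H = Σ_{h∈H} h lies in the two-sided ideal of ℚ[G] generated by the norm elements N_J for J ∈ 𝒥 if and only if for every simple ℚ[G]-module V with V^H ≠ 0 there exists J ∈ 𝒥 with V^J ≠ 0. -/
/-- The norm element `N_K = Σ_{k ∈ K} k` of a subgroup `K`, in the group algebra `ℚ[G]`. -/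
noncomputable def normElement (G : Type) [Group G] (K : Subgroup G) : MonoidAlgebra ℚ G :=
  ∑ᶠ k : K, MonoidAlgebra.of ℚ G (k : G)

/-- A module over `ℚ[G]` has nonzero `K`-fixed points. -/
def hasNonzeroFixedPoint (G : Type) [Group G] (K : Subgroup G)
    (V : Type) [AddCommGroup V] [Module (MonoidAlgebra ℚ G) V] : Prop :=
  ∃ v : V, v ≠ 0 ∧ ∀ k ∈ K, MonoidAlgebra.of ℚ G k • v = v

section Aux

variable {G : Type} [Group G]

lemma normElement_eq_sum (K : Subgroup G) [Fintype K] :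
    normElement G K = ∑ k : K, MonoidAlgebra.of ℚ G (k : G) :=
  finsum_eq_sum_of_fintype _

lemma of_mul_normElement (K : Subgroup G) [Fintype K] {k0 : G} (hk : k0 ∈ K) :
    MonoidAlgebra.of ℚ G k0 * normElement G K = normElement G K := by
  rw [normElement_eq_sum, Finset.mul_sum]
  have : ∀ k : K, MonoidAlgebra.of ℚ G k0 * MonoidAlgebra.of ℚ G (k : G)
      = MonoidAlgebra.of ℚ G ((((⟨k0, hk⟩ : K) * k : K)) : G) := by
    intro k; rw [← map_mul]; rfl
  simp_rw [this]
  exact Equiv.sum_comp (Equiv.mulLeft (⟨k0, hk⟩ : K))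
    (fun k : K => MonoidAlgebra.of ℚ G (k : G))

lemma normElement_smul_fixed {K : Subgroup G} [Fintype K]
    {V : Type} [AddCommGroup V] [Module (MonoidAlgebra ℚ G) V]
    {v : V} (hv : ∀ k ∈ K, MonoidAlgebra.of ℚ G k • v = v) :
    normElement G K • v = (Fintype.card K : MonoidAlgebra ℚ G) • v := by
  rw [normElement_eq_sum, Finset.sum_smul]
  have : ∀ k : K, MonoidAlgebra.of ℚ G (k : G) • v = v := fun k => hv k k.2
  simp_rw [this, Finset.sum_const, Finset.card_univ, Nat.cast_smul_eq_nsmul]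

lemma card_cast_isUnit (K : Subgroup G) [Fintype K] :
    IsUnit ((Fintype.card K : MonoidAlgebra ℚ G)) := by
  have h1 : ((Fintype.card K : ℚ)) ≠ 0 := by
    exact_mod_cast Fintype.card_ne_zero
  have : (Fintype.card K : MonoidAlgebra ℚ G)
      = algebraMap ℚ (MonoidAlgebra ℚ G) (Fintype.card K : ℚ) := by
    push_cast; rfl
  rw [this]
  exact (isUnit_iff_ne_zero.2 h1).map (algebraMap ℚ (MonoidAlgebra ℚ G))

/-- If a simple (or any) module has no nonzero `K`-fixed point, then `N_K` acts as zero. -/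
lemma normElement_smul_eq_zero {K : Subgroup G} [Fintype K]
    {V : Type} [AddCommGroup V] [Module (MonoidAlgebra ℚ G) V]
    (h : ¬ hasNonzeroFixedPoint G K V) (w : V) : normElement G K • w = 0 := by
  by_contra hne
  refine h ⟨normElement G K • w, hne, ?_⟩
  intro k hk
  rw [← mul_smul, of_mul_normElement K hk]

/-- If a module has a nonzero `K`-fixed point `v`, then `N_K • v ≠ 0`. -/
lemma normElement_smul_ne_zero {K : Subgroup G} [Fintype K]
    {V : Type} [AddCommGroup V] [Module (MonoidAlgebra ℚ G) V]
    {v : V} (hv0 : v ≠ 0) (hv : ∀ k ∈ K, MonoidAlgebra.of ℚ G k • v = v) :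
    normElement G K • v ≠ 0 := by
  rw [normElement_smul_fixed hv]
  intro h
  obtain ⟨u, hu⟩ := card_cast_isUnit K (G := G)
  apply hv0
  have := congrArg (fun x => (↑u⁻¹ : MonoidAlgebra ℚ G) • x) h
  simpa [← mul_smul, ← hu, ← Units.val_mul, u.inv_mul] using this

end Aux

/-- `N_H` lies in the two-sided ideal of `ℚ[G]` generated by the norm
elements `N_{Jᵢ}` if and only if every simple `ℚ[G]`-module `V` with `V^H ≠ 0`
satisfies `V^{Jᵢ} ≠ 0` for some `i`. -/
theorem statement4 (G : Type) [Group G] [Finite G] (H : Subgroup G)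
    (ℓ : ℕ) (J : Fin ℓ → Subgroup G) (hJ : ∀ i, J i ≠ ⊥) :
    normElement G H ∈
        TwoSidedIdeal.span (Set.range fun i : Fin ℓ => normElement G (J i)) ↔
    (∀ (V : Type) (_ : AddCommGroup V) (_ : Module (MonoidAlgebra ℚ G) V),
        IsSimpleModule (MonoidAlgebra ℚ G) V →
        hasNonzeroFixedPoint G H V → ∃ i, hasNonzeroFixedPoint G (J i) V) := by
  classical
  letI : Fintype G := Fintype.ofFinite G
  haveI : ∀ K : Subgroup G, Fintype K := fun K => Fintype.ofFinite K
  haveI : NeZero ((Fintype.card G : ℚ)) :=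
    ⟨by exact_mod_cast (Fintype.card_ne_zero (α := G))⟩
  set R := MonoidAlgebra ℚ G with hR
  set s : Set R := Set.range fun i : Fin ℓ => normElement G (J i) with hs
  constructor
  · -- N_H ∈ span → representation condition
    intro hmem V _ _ hsimple ⟨v, hv0, hvfix⟩
    by_contra hcon
    push_neg at hcon
    -- the annihilator of v… use annihilator of whole module as two-sided ideal
    set A : TwoSidedIdeal R := TwoSidedIdeal.mk'
      {x : R | ∀ w : V, x • w = 0}
      (by intro w; simp)
      (by intro x y hx hy w; simp [add_smul, hx w, hy w])
      (by intro x hx w; simp [neg_smul, hx w])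
      (by intro x y hy w; rw [mul_smul, hy w, smul_zero])
      (by intro x y hx w; rw [mul_smul, hx (y • w)]) with hA
    have hmemA : ∀ x : R, x ∈ A ↔ ∀ w : V, x • w = 0 := by
      intro x
      rw [hA, TwoSidedIdeal.mem_mk']
      exact Iff.rfl
    have hsub : s ⊆ A := by
      rintro x ⟨i, rfl⟩
      rw [SetLike.mem_coe, hmemA]
      exact normElement_smul_eq_zero (hcon i)
    have : normElement G H ∈ A := TwoSidedIdeal.mem_span_iff.1 hmem A hsub
    exact normElement_smul_ne_zero hv0 hvfix ((hmemA _).1 this v)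
  · -- representation condition → N_H ∈ span
    intro hV
    set I : TwoSidedIdeal R := TwoSidedIdeal.span s with hI
    set Q := R ⧸ (TwoSidedIdeal.asIdeal I) with hQ
    -- membership reduces to the quotient
    rw [← TwoSidedIdeal.mem_asIdeal (I := I)]
    rw [← Submodule.Quotient.mk_eq_zero]
    have key : ∀ q : Q, normElement G H • q = 0 := by
      have hss : sSup {m : Submodule R Q | IsSimpleModule R m} = ⊤ :=
        IsSemisimpleModule.sSup_simples_eq_top R Q
      intro q
      have hq : q ∈ (⊤ : Submodule R Q) := trivial
      rw [← hss, sSup_eq_iSup'] at hq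
      refine Submodule.iSup_induction _ (motive := fun q => normElement G H • q = 0) hq ?_ ?_ ?_
      · rintro ⟨W, hW⟩ x hx
        -- W is a simple submodule of the quotient; every element of I kills Q
        have hIkill : ∀ y ∈ I, ∀ z : Q, y • z = 0 := by
          intro y hy z
          obtain ⟨z, rfl⟩ := Submodule.Quotient.mk_surjective _ z
          rw [← Submodule.Quotient.mk_smul, smul_eq_mul, Submodule.Quotient.mk_eq_zero]
          exact TwoSidedIdeal.mem_asIdeal.2 (I.mul_mem_right _ _ hy)
        haveI : IsSimpleModule R W := hW
        -- W has no nonzero J i fixed points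
        have hnofix : ∀ i, ¬ hasNonzeroFixedPoint G (J i) W := by
          rintro i ⟨w, hw0, hwfix⟩
          have hwfix' : ∀ k ∈ J i, MonoidAlgebra.of ℚ G k • (w : Q) = (w : Q) := by
            intro k hk
            have := congrArg (Subtype.val) (hwfix k hk)
            simpa using this
          have h1 : normElement G (J i) • (w : Q) ≠ 0 :=
            normElement_smul_ne_zero (by simpa using hw0) hwfix'
          exact h1 (hIkill _ (TwoSidedIdeal.subset_span ⟨i, rfl⟩) _)
        have hnofixH : ¬ hasNonzeroFixedPoint G H W := by
          intro hfix
          obtain ⟨i, hi⟩ := hV W _ _ ‹IsSimpleModule R W› hfix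
          exact hnofix i hi
        have : normElement G H • (⟨x, hx⟩ : W) = 0 :=
          normElement_smul_eq_zero hnofixH _
        have := congrArg (Subtype.val) this
        simpa using this
      · simp
      · intro x y hx hy
        rw [smul_add, hx, hy, add_zero]
    have := key (Submodule.Quotient.mk (1 : R))
    rwa [← Submodule.Quotient.mk_smul, smul_eq_mul, mul_one] at this
end

section
/- Let G be a finite group, H ≤ G, and 𝒥 = {J₁,…,J_ℓ} nontrivial subgroups such that there exists a surjective ℚ[G]-module morphism ⊕ᵢ ℚ[G/Jᵢ]^{nᵢ} → ℚ[G/H]. Then there exist a positive integer c, an injective ℤ[G]-module morphism ψ : ℤ[G/H] → ⊕ᵢ ℤ[G/Jᵢ]^{nᵢ}, and a ℤ[G]-module morphism φ : ⊕ᵢ ℤ[G/Jᵢ]^{nᵢ} → ℤ[G/H] whose image has finite index, such that φ ∘ ψ = c · id_{ℤ[G/H]}. -/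
/-- The permutation module `ℚ[G/H]`, as a module over the group algebra `ℚ[G]`. -/
abbrev permModQ (G : Type) [Group G] (H : Subgroup G) : Type :=
  (Representation.ofMulAction ℚ G (G ⧸ H)).asModule

/-- The permutation module `ℤ[G/H]`, as a module over the group algebra `ℤ[G]`. -/
abbrev permModZ (G : Type) [Group G] (H : Subgroup G) : Type :=
  (Representation.ofMulAction ℤ G (G ⧸ H)).asModule

noncomputable instance (G : Type) [Group G] (H : Subgroup G) : AddCommGroup (permModZ G H) :=
  inferInstanceAs (AddCommGroup (MonoidAlgebra ℤ (G ⧸ H)))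

section Aux

open Representation

variable {G : Type} [Group G]

/-- Retype an element of a permutation `asModule` as a finitely supported function. -/
private abbrev unP (R : Type) [CommSemiring R] {X : Type} [MulAction G X]
    (v : (ofMulAction R G X).asModule) : X →₀ R := MonoidAlgebra.coeff (R := R) (M := X) v

private lemma perm_single_smul (R : Type) [CommSemiring R] {X : Type} [MulAction G X]
    (g : G) (x : (ofMulAction R G X).asModule) :
    unP R ((MonoidAlgebra.single g (1 : R)) • x) = Finsupp.mapDomain (g • ·) (unP R x) := by
  rw [Representation.single_smul, one_smul]
  rfl

/-- Build a `ℤ[G]`-linear map from an additive map commuting with the `G`-action. -/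
private def mkZG {M N : Type} [AddCommGroup M] [AddCommGroup N]
    [Module (MonoidAlgebra ℤ G) M] [Module (MonoidAlgebra ℤ G) N]
    (f : M →+ N)
    (hf : ∀ (g : G) (x : M), f ((MonoidAlgebra.single g (1 : ℤ)) • x)
        = (MonoidAlgebra.single g (1 : ℤ)) • f x) :
    M →ₗ[MonoidAlgebra ℤ G] N where
  toFun := f
  map_add' := f.map_add
  map_smul' := by
    intro r x
    simp only [RingHom.id_apply]
    induction r using MonoidAlgebra.induction_linear with
    | zero => simp
    | add a b ha hb => rw [add_smul, add_smul, f.map_add, ha, hb]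
    | single a b =>
      have h1 : (MonoidAlgebra.single a b : MonoidAlgebra ℤ G) = b • MonoidAlgebra.single a (1 : ℤ) := by
        rw [MonoidAlgebra.smul_single, smul_eq_mul, mul_one]
      rw [h1, smul_assoc, f.map_zsmul, hf, smul_assoc]

private noncomputable def castP (X : Type) [MulAction G X] :
    (ofMulAction ℤ G X).asModule →+ (ofMulAction ℚ G X).asModule :=
  (MonoidAlgebra.coeffAddEquiv (R := ℚ) (M := X)).symm.toAddMonoidHom.comp
    ((Finsupp.mapRange.addMonoidHom (Int.castAddHom ℚ)).comp
      (MonoidAlgebra.coeffAddEquiv (R := ℤ) (M := X)).toAddMonoidHom)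

private lemma castP_apply {X : Type} [MulAction G X]
    (x : (ofMulAction ℤ G X).asModule) (a : X) :
    unP ℚ (castP (G := G) X x) a = ((unP ℤ x a : ℤ) : ℚ) := by
  rfl

private lemma castP_injective (X : Type) [MulAction G X] :
    Function.Injective (castP (G := G) X) := by
  intro x y h
  refine MonoidAlgebra.ext (Finsupp.ext (f := unP ℤ x) (g := unP ℤ y) fun a => ?_)
  have h2 : unP ℚ (castP (G := G) X x) a = unP ℚ (castP (G := G) X y) a := by rw [h]
  rw [castP_apply, castP_apply] at h2
  exact_mod_cast h2

private lemma castP_equivariant (X : Type) [MulAction G X] (g : G)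
    (x : (ofMulAction ℤ G X).asModule) :
    castP (G := G) X ((MonoidAlgebra.single g (1 : ℤ)) • x)
      = (MonoidAlgebra.single g (1 : ℚ)) • castP (G := G) X x := by
  refine MonoidAlgebra.ext ?_
  show unP ℚ (castP (G := G) X ((MonoidAlgebra.single g (1 : ℤ)) • x)) = unP ℚ _
  rw [perm_single_smul ℚ]
  show Finsupp.mapRange.addMonoidHom (Int.castAddHom ℚ) (unP ℤ ((MonoidAlgebra.single g (1 : ℤ)) • x)) = _
  rw [perm_single_smul ℤ]
  simp only [Finsupp.mapRange.addMonoidHom_apply]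
  exact (Finsupp.mapDomain_mapRange _ _ _ _ (fun p q => by simp)).symm

private def piCast {ι : Type} {N Nz : ι → Type} [∀ i, AddCommMonoid (N i)]
    [∀ i, AddCommMonoid (Nz i)] (c : ∀ i, Nz i →+ N i) : (∀ i, Nz i) →+ (∀ i, N i) where
  toFun y i := c i (y i)
  map_zero' := funext fun i => (c i).map_zero
  map_add' x y := funext fun i => (c i).map_add _ _

private lemma piCast_apply {ι : Type} {N Nz : ι → Type} [∀ i, AddCommMonoid (N i)]
    [∀ i, AddCommMonoid (Nz i)] (c : ∀ i, Nz i →+ N i) (y : ∀ i, Nz i) (i : ι) :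
    piCast c y i = c i (y i) := rfl

private lemma piCast_injective {ι : Type} {N Nz : ι → Type} [∀ i, AddCommMonoid (N i)]
    [∀ i, AddCommMonoid (Nz i)] (c : ∀ i, Nz i →+ N i)
    (h : ∀ i, Function.Injective (c i)) : Function.Injective (piCast c) :=
  fun x y hxy => funext fun i => h i (congrFun hxy i)

private lemma span_finsupp (α : Type) (x : MonoidAlgebra ℤ α) :
    x ∈ AddSubgroup.closure (Set.range fun a : α => MonoidAlgebra.single a (1 : ℤ)) := by
  induction x using MonoidAlgebra.induction with
  | zero => exact zero_mem _
  | single_add a b f _ _ ih =>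
    refine add_mem ?_ ih
    have h1 : MonoidAlgebra.single a b = b • MonoidAlgebra.single a (1 : ℤ) := by
      rw [MonoidAlgebra.smul_single, smul_eq_mul, mul_one]
    rw [h1]
    exact zsmul_mem (AddSubgroup.subset_closure (Set.mem_range_self a)) b

private lemma span_pi {ι : Type} [Fintype ι] [DecidableEq ι] {Nz : ι → Type}
    [∀ i, AddCommGroup (Nz i)] (S : ∀ i, Set (Nz i))
    (h : ∀ i, ∀ x : Nz i, x ∈ AddSubgroup.closure (S i)) (x : ∀ i, Nz i) :
    x ∈ AddSubgroup.closure (⋃ i, Pi.single i '' S i) := by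
  have hx : x = ∑ i, Pi.single i (x i) := by
    funext j
    rw [Finset.sum_apply]
    simp [Finset.sum_pi_single]
  rw [hx]
  refine sum_mem fun i _ => ?_
  refine AddSubgroup.closure_induction
    (p := fun z _ => Pi.single i z ∈ AddSubgroup.closure (⋃ i, Pi.single i '' S i))
    (fun z hz => AddSubgroup.subset_closure (Set.mem_iUnion.2 ⟨i, Set.mem_image_of_mem _ hz⟩))
    ?_ ?_ ?_ (h i (x i))
  · show Pi.single i (0 : Nz i) ∈ _
    rw [Pi.single_zero]; exact zero_mem _
  · intro a b _ _ ha hb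
    show Pi.single i (a + b) ∈ _
    rw [Pi.single_add]; exact add_mem ha hb
  · intro a _ ha
    show Pi.single i (-a) ∈ _
    rw [Pi.single_neg]; exact neg_mem ha

private lemma int_of_den_dvd (q : ℚ) (n : ℕ) (h : q.den ∣ n) :
    ∃ z : ℤ, (n : ℚ) * q = (z : ℚ) := by
  obtain ⟨k, hk⟩ := h
  have hd : (q.den : ℚ) ≠ 0 := by exact_mod_cast q.den_ne_zero
  have hnd := Rat.num_div_den q
  have h1 : q * (q.den : ℚ) = (q.num : ℚ) := (eq_div_iff hd).mp hnd.symm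
  refine ⟨k * q.num, ?_⟩
  subst hk
  push_cast
  linear_combination (k : ℚ) * h1

private lemma hden_perm {X : Type} [Fintype X] [MulAction G X]
    (v : (ofMulAction ℚ G X).asModule) :
    ∃ k : ℕ, 0 < k ∧ ∃ y : (ofMulAction ℤ G X).asModule,
      castP (G := G) X y = k • v := by
  classical
  set w : X →₀ ℚ := unP ℚ v with hw
  refine ⟨∏ a : X, (w a).den, Finset.prod_pos fun a _ => (w a).pos, ?_⟩
  have hz : ∀ a : X, ∃ z : ℤ, ((∏ a : X, (w a).den : ℕ) : ℚ) * w a = z := fun a =>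
    int_of_den_dvd _ _ (Finset.dvd_prod_of_mem _ (Finset.mem_univ a))
  choose z hzz using hz
  refine ⟨MonoidAlgebra.ofCoeff (Finsupp.equivFunOnFinite.symm z), ?_⟩
  refine MonoidAlgebra.ext (Finsupp.ext fun a => ?_)
  have h1 : unP ℚ (castP (G := G) X (MonoidAlgebra.ofCoeff (Finsupp.equivFunOnFinite.symm z))) a = ((z a : ℤ) : ℚ) := by
    rfl
  have h2 : unP ℚ ((∏ a : X, (w a).den) • v) a
      = ((∏ a : X, (w a).den : ℕ) : ℚ) * w a := by
    have h3 : unP ℚ ((∏ a : X, (w a).den) • v) a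
        = (∏ a : X, (w a).den) • (w a) :=
      (Finsupp.applyAddHom (M := ℚ) a).map_nsmul _ (unP ℚ v)
    rw [h3, nsmul_eq_mul]
  show unP ℚ (castP (G := G) X (MonoidAlgebra.ofCoeff (Finsupp.equivFunOnFinite.symm z))) a
      = unP ℚ ((∏ a : X, (w a).den) • v) a
  rw [h1, h2, ← hzz a]

private lemma hden_pi {ι : Type} [Fintype ι] {N Nz : ι → Type} [∀ i, AddCommMonoid (N i)]
    [∀ i, AddCommMonoid (Nz i)] (c : ∀ i, Nz i →+ N i)
    (h : ∀ i (v : N i), ∃ k : ℕ, 0 < k ∧ ∃ y : Nz i, c i y = k • v) (v : ∀ i, N i) :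
    ∃ k : ℕ, 0 < k ∧ ∃ y : ∀ i, Nz i, piCast c y = k • v := by
  classical
  choose k hk y hy using fun i => h i (v i)
  refine ⟨∏ i, k i, Finset.prod_pos fun i _ => hk i,
    fun i => ((∏ j, k j) / k i) • y i, funext fun i => ?_⟩
  obtain ⟨r, hr⟩ : k i ∣ ∏ j, k j := Finset.dvd_prod_of_mem _ (Finset.mem_univ i)
  have hq : (∏ j, k j) / k i = r := by rw [hr, Nat.mul_div_cancel_left _ (hk i)]
  have h2 : ((∏ j, k j) • v) i = (∏ j, k j) • v i :=
    Pi.smul_apply _ _ _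
  rw [piCast_apply, hq, (c i).map_nsmul, hy i, h2, hr, mul_comm, mul_smul]

private lemma integralize {M N Mz Nz : Type}
    [AddCommGroup M] [AddCommGroup N] [AddCommGroup Mz] [AddCommGroup Nz]
    (cM : Mz →+ M) (cN : Nz →+ N) (T : M →+ N)
    (S : Set Mz) (hSfin : S.Finite) (hspan : ∀ x : Mz, x ∈ AddSubgroup.closure S)
    (hden : ∀ v : N, ∃ k : ℕ, 0 < k ∧ ∃ y : Nz, cN y = k • v) :
    ∃ c : ℕ, 0 < c ∧ ∀ x : Mz, ∃ y : Nz, cN y = c • T (cM x) := by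
  classical
  choose k hk y hy using hden
  refine ⟨∏ b ∈ hSfin.toFinset, k (T (cM b)), Finset.prod_pos fun b _ => hk _, fun x => ?_⟩
  set c := ∏ b ∈ hSfin.toFinset, k (T (cM b)) with hc
  suffices hmem : c • T (cM x) ∈ cN.range by
    obtain ⟨w, hw⟩ := hmem; exact ⟨w, hw⟩
  refine AddSubgroup.closure_induction
    (p := fun z _ => c • T (cM z) ∈ cN.range) ?_ ?_ ?_ ?_ (hspan x)
  · intro b hb
    obtain ⟨r, hr⟩ : k (T (cM b)) ∣ c :=
      Finset.dvd_prod_of_mem _ (hSfin.mem_toFinset.2 hb)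
    refine ⟨r • y (T (cM b)), ?_⟩
    rw [cN.map_nsmul, hy, hr, mul_comm, mul_smul]
  · show c • T (cM 0) ∈ cN.range
    simp only [map_zero, smul_zero]; exact zero_mem _
  · intro a b _ _ ha hb
    show c • T (cM (a + b)) ∈ cN.range
    rw [map_add, map_add, smul_add]; exact add_mem ha hb
  · intro a _ ha
    show c • T (cM (-a)) ∈ cN.range
    rw [map_neg, map_neg, smul_neg]; exact neg_mem ha

end Aux

/-- if there is a surjective `ℚ[G]`-module morphism
`⊕ᵢ ℚ[G/Jᵢ]^{nᵢ} → ℚ[G/H]`, then there are a positive integer `c`, an injective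
`ℤ[G]`-morphism `ψ : ℤ[G/H] → ⊕ᵢ ℤ[G/Jᵢ]^{nᵢ}` and a `ℤ[G]`-morphism
`φ : ⊕ᵢ ℤ[G/Jᵢ]^{nᵢ} → ℤ[G/H]` whose image has finite index, with `φ ∘ ψ = c · id`. -/
theorem statement9 (G : Type) [Group G] [Finite G] (H : Subgroup G)
    (ℓ : ℕ) (J : Fin ℓ → Subgroup G) (hJ : ∀ i, J i ≠ ⊥)
    (hrel : ∃ (m : Fin ℓ → ℕ)
        (F : (∀ i : Fin ℓ, Fin (m i) → permModQ G (J i)) →ₗ[MonoidAlgebra ℚ G] permModQ G H),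
        Function.Surjective F) :
    ∃ (c : ℕ) (_ : 0 < c) (n : Fin ℓ → ℕ)
      (ψ : permModZ G H →ₗ[MonoidAlgebra ℤ G] (∀ i : Fin ℓ, Fin (n i) → permModZ G (J i)))
      (φ : (∀ i : Fin ℓ, Fin (n i) → permModZ G (J i)) →ₗ[MonoidAlgebra ℤ G] permModZ G H),
      Function.Injective ψ ∧
      Finite (permModZ G H ⧸ LinearMap.range φ) ∧
      φ ∘ₗ ψ = c • (LinearMap.id : permModZ G H →ₗ[MonoidAlgebra ℤ G] permModZ G H) := by
  classical
  obtain ⟨m, F, hF⟩ := hrel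
  haveI : Fintype G := Fintype.ofFinite G
  haveI : NeZero ((Fintype.card G : ℚ)) := ⟨Nat.cast_ne_zero.2 Fintype.card_ne_zero⟩
  haveI : Fintype (G ⧸ H) := Fintype.ofFinite _
  -- a section of F, by Maschke semisimplicity
  obtain ⟨q, hq⟩ := MonoidAlgebra.Submodule.exists_isCompl (LinearMap.ker F)
  set Fq : q →ₗ[MonoidAlgebra ℚ G] permModQ G H := F ∘ₗ q.subtype with hFq
  have hinj : Function.Injective Fq := by
    intro a b hab
    have h1 : (a - b : q).1 ∈ LinearMap.ker F ⊓ q := by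
      constructor
      · have h0 : Fq (a - b) = 0 := by
          rw [show Fq (a - b) = Fq a - Fq b from map_sub Fq a b, hab, sub_self]
        simpa [hFq, LinearMap.mem_ker] using h0
      · exact (a - b).2
    have h2 := hq.disjoint.le_bot h1
    rw [Submodule.mem_bot] at h2
    exact Subtype.ext (sub_eq_zero.mp h2)
  have hsurj : Function.Surjective Fq := by
    intro v
    obtain ⟨u, hu⟩ := hF v
    have hu2 : u ∈ LinearMap.ker F ⊔ q := by rw [hq.sup_eq_top]; trivial
    obtain ⟨a, ha, b, hb, hab⟩ := Submodule.mem_sup.1 hu2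
    refine ⟨⟨b, hb⟩, ?_⟩
    have hFb : F b = F u := by
      rw [← hab, map_add, LinearMap.mem_ker.1 ha, zero_add]
    simpa [hFq, hFb] using hu
  set e := LinearEquiv.ofBijective Fq ⟨hinj, hsurj⟩ with he
  set s : permModQ G H →ₗ[MonoidAlgebra ℚ G]
      (∀ i : Fin ℓ, Fin (m i) → permModQ G (J i)) := q.subtype ∘ₗ e.symm.toLinearMap with hs
  have hFs : ∀ v, F (s v) = v := by
    intro v
    have h1 : Fq (e.symm v) = v := by
      have h2 := e.apply_symm_apply v
      exact h2
    simpa [hs, hFq] using h1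
  -- cast maps
  set cH := castP (G := G) (G ⧸ H) with hcH
  set cPi : (∀ i : Fin ℓ, Fin (m i) → permModZ G (J i)) →+
      (∀ i : Fin ℓ, Fin (m i) → permModQ G (J i)) :=
    piCast (fun i => piCast (fun _ : Fin (m i) => castP (G := G) (G ⧸ J i))) with hcPi
  have hcHinj : Function.Injective cH := castP_injective _
  have hcPiinj : Function.Injective cPi :=
    piCast_injective _ fun i => piCast_injective _ fun _ => castP_injective _
  -- spanning sets
  have hspanH : ∀ x : permModZ G H, x ∈ AddSubgroup.closure
      (Set.range fun a : G ⧸ H => MonoidAlgebra.single a (1 : ℤ)) := span_finsupp _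
  have hfinH : (Set.range fun a : G ⧸ H => MonoidAlgebra.single a (1 : ℤ)).Finite :=
    Set.finite_range _
  set SPi : Set (∀ i : Fin ℓ, Fin (m i) → permModZ G (J i)) :=
    ⋃ i, Pi.single i ''
      (⋃ j : Fin (m i), Pi.single j ''
        (Set.range fun a : G ⧸ J i => MonoidAlgebra.single a (1 : ℤ))) with hSPi
  have hspanPi : ∀ x : ∀ i : Fin ℓ, Fin (m i) → permModZ G (J i),
      x ∈ AddSubgroup.closure SPi :=
    span_pi _ fun i => span_pi _ fun j => span_finsupp _
  have hfinPi : SPi.Finite := by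
    refine Set.finite_iUnion fun i => Set.Finite.image _ ?_
    haveI : Finite (G ⧸ J i) := Quotient.finite _
    exact Set.finite_iUnion fun j => Set.Finite.image _ (Set.finite_range _)
  -- denominator bounds
  have hdenH : ∀ v : permModQ G H, ∃ k : ℕ, 0 < k ∧ ∃ y : permModZ G H, cH y = k • v :=
    fun v => hden_perm v
  have hdenPi : ∀ v : ∀ i : Fin ℓ, Fin (m i) → permModQ G (J i),
      ∃ k : ℕ, 0 < k ∧ ∃ y : ∀ i : Fin ℓ, Fin (m i) → permModZ G (J i), cPi y = k • v := by
    refine hden_pi _ fun i => hden_pi _ fun j v => ?_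
    haveI : Fintype (G ⧸ J i) := Fintype.ofFinite _
    exact hden_perm v
  -- integralize s and F
  obtain ⟨cψ, hcψpos, hcψ⟩ := integralize cH cPi s.toAddMonoidHom _ hfinH hspanH hdenPi
  obtain ⟨cφ, hcφpos, hcφ⟩ := integralize cPi cH F.toAddMonoidHom _ hfinPi hspanPi hdenH
  choose ψ₀ hψ₀ using hcψ
  choose φ₀ hφ₀ using hcφ
  -- equivariance of the cast maps
  have hcHeq : ∀ (g : G) (x : permModZ G H),
      cH ((MonoidAlgebra.single g (1 : ℤ)) • x)
        = (MonoidAlgebra.single g (1 : ℚ)) • cH x :=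
    fun g x => castP_equivariant _ g x
  have hcPiEq : ∀ (g : G) (y : ∀ i : Fin ℓ, Fin (m i) → permModZ G (J i)),
      cPi ((MonoidAlgebra.single g (1 : ℤ)) • y)
        = (MonoidAlgebra.single g (1 : ℚ)) • cPi y := by
    intro g y
    funext i j
    show castP (G := G) (G ⧸ J i) (((MonoidAlgebra.single g (1 : ℤ)) • y) i j) = _
    rw [Pi.smul_apply, Pi.smul_apply, castP_equivariant]
    rfl
  -- ψ₀ and φ₀ are additive and equivariant
  have hψadd : ∀ x y : permModZ G H, ψ₀ (x + y) = ψ₀ x + ψ₀ y := by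
    intro x y
    refine hcPiinj ?_
    rw [map_add, hψ₀, hψ₀, hψ₀, map_add, map_add, smul_add]
  have hψeq : ∀ (g : G) (x : permModZ G H),
      ψ₀ ((MonoidAlgebra.single g (1 : ℤ)) • x)
        = (MonoidAlgebra.single g (1 : ℤ)) • ψ₀ x := by
    intro g x
    refine hcPiinj ?_
    rw [hψ₀, hcPiEq, hψ₀, hcHeq]
    have h1 : s.toAddMonoidHom ((MonoidAlgebra.single g (1 : ℚ)) • cH x)
        = (MonoidAlgebra.single g (1 : ℚ)) • s.toAddMonoidHom (cH x) := s.map_smul _ _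
    rw [h1]
    exact smul_comm cψ _ _
  have hφadd : ∀ x y, φ₀ (x + y) = φ₀ x + φ₀ y := by
    intro x y
    refine hcHinj ?_
    rw [map_add, hφ₀, hφ₀, hφ₀, map_add, map_add, smul_add]
  have hφeq : ∀ (g : G) (y : ∀ i : Fin ℓ, Fin (m i) → permModZ G (J i)),
      φ₀ ((MonoidAlgebra.single g (1 : ℤ)) • y)
        = (MonoidAlgebra.single g (1 : ℤ)) • φ₀ y := by
    intro g y
    refine hcHinj ?_
    rw [hφ₀, hcHeq, hφ₀, hcPiEq]
    have h1 : F.toAddMonoidHom ((MonoidAlgebra.single g (1 : ℚ)) • cPi y)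
        = (MonoidAlgebra.single g (1 : ℚ)) • F.toAddMonoidHom (cPi y) := F.map_smul _ _
    rw [h1]
    exact smul_comm cφ _ _
  have hψ0 : ψ₀ 0 = 0 := by
    refine hcPiinj ?_
    rw [hψ₀, map_zero, map_zero, map_zero, smul_zero]
  have hφ0 : φ₀ 0 = 0 := by
    refine hcHinj ?_
    rw [hφ₀, map_zero, map_zero, map_zero, smul_zero]
  set ψ : permModZ G H →ₗ[MonoidAlgebra ℤ G]
      (∀ i : Fin ℓ, Fin (m i) → permModZ G (J i)) := mkZG ⟨⟨ψ₀, hψ0⟩, hψadd⟩ hψeq with hψdef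
  set φ : (∀ i : Fin ℓ, Fin (m i) → permModZ G (J i)) →ₗ[MonoidAlgebra ℤ G]
      permModZ G H := mkZG ⟨⟨φ₀, hφ0⟩, hφadd⟩ hφeq with hφdef
  set c := cφ * cψ with hcdef
  -- the key identity
  have hkey : ∀ x : permModZ G H, φ₀ (ψ₀ x) = c • x := by
    intro x
    refine hcHinj ?_
    rw [hφ₀, hψ₀, cH.map_nsmul]
    have h1 : F.toAddMonoidHom (cψ • s.toAddMonoidHom (cH x))
        = cψ • F (s (cH x)) := F.toAddMonoidHom.map_nsmul _ _
    rw [h1, hFs, ← mul_smul]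
  have hcpos : 0 < c := Nat.mul_pos hcφpos hcψpos
  have hsmul_apply : ∀ (k : ℕ) (w : permModZ G H) (a : G ⧸ H),
      unP ℤ (k • w) a = (k : ℤ) * unP ℤ w a := by
    intro k w a
    have h1 : unP ℤ (k • w) a = k • unP ℤ w a :=
      (Finsupp.applyAddHom (M := ℤ) a).map_nsmul k (unP ℤ w)
    rw [h1, nsmul_eq_mul]
  have hinjψ : Function.Injective ψ := by
    have hz : ∀ x : permModZ G H, ψ x = 0 → x = 0 := by
      intro x hx
      have hx' : ψ₀ x = 0 := hx
      have h2 : c • x = 0 := by rw [← hkey x, hx', hφ0]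
      refine MonoidAlgebra.ext (Finsupp.ext (f := unP ℤ x) fun a => ?_)
      have h3 : (c : ℤ) * unP ℤ x a = 0 := by
        rw [← hsmul_apply c x a, h2]; rfl
      have hc0 : (c : ℤ) ≠ 0 := by exact_mod_cast hcpos.ne'
      exact (mul_eq_zero.1 h3).resolve_left hc0
    intro x y hxy
    exact sub_eq_zero.mp (hz (x - y) (by rw [map_sub, hxy, sub_self]))
  haveI : NeZero c := ⟨hcpos.ne'⟩
  have hdiv : ∀ w : permModZ G H, (∀ a, (c : ℤ) ∣ unP ℤ w a) → w ∈ LinearMap.range φ := by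
    intro w hw
    set u : permModZ G H := MonoidAlgebra.ofCoeff (Finsupp.mapRange (fun t => t / (c : ℤ)) (by simp) (unP ℤ w)) with hu
    refine ⟨ψ u, ?_⟩
    show φ₀ (ψ₀ u) = w
    rw [hkey]
    refine MonoidAlgebra.ext (Finsupp.ext (g := unP ℤ w) fun a => ?_)
    rw [hsmul_apply]
    have h5 : unP ℤ u a = unP ℤ w a / (c : ℤ) := Finsupp.mapRange_apply (hf := by simp)
    rw [h5]
    exact Int.mul_ediv_cancel' (hw a)
  have hfinQ : Finite (permModZ G H ⧸ LinearMap.range φ) := by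
    refine Finite.of_surjective (fun z : (G ⧸ H) → ZMod c =>
      (Submodule.Quotient.mk
        (MonoidAlgebra.ofCoeff (Finsupp.equivFunOnFinite.symm fun a => ((z a).val : ℤ))) :
        permModZ G H ⧸ LinearMap.range φ)) ?_
    intro t
    obtain ⟨v, rfl⟩ := Submodule.Quotient.mk_surjective _ t
    refine ⟨fun a => ((unP ℤ v a : ℤ) : ZMod c), ?_⟩
    set lift : permModZ G H := MonoidAlgebra.ofCoeff (Finsupp.equivFunOnFinite.symm
      (fun b => ((((unP ℤ v b : ℤ) : ZMod c)).val : ℤ))) with hlift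
    show Submodule.Quotient.mk lift = Submodule.Quotient.mk v
    rw [Submodule.Quotient.eq]
    refine hdiv _ fun a => ?_
    have h4 : unP ℤ (lift - v) a
        = ((((unP ℤ v a : ℤ) : ZMod c)).val : ℤ) - unP ℤ v a := by
      have h4a : unP ℤ (lift - v) a = unP ℤ lift a - unP ℤ v a := rfl
      rw [h4a, hlift]
      rfl
    rw [h4, ← ZMod.intCast_zmod_eq_zero_iff_dvd]
    have h6 : ((((((unP ℤ v a : ℤ) : ZMod c)).val : ℤ)) : ZMod c)
        = ((unP ℤ v a : ℤ) : ZMod c) := by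
      push_cast
      rw [ZMod.natCast_val, ZMod.cast_id]
    rw [Int.cast_sub, h6, sub_self]
  refine ⟨c, hcpos, m, ψ, φ, hinjψ, hfinQ, ?_⟩
  refine LinearMap.ext fun x => ?_
  show φ₀ (ψ₀ x) = (c • (LinearMap.id : permModZ G H →ₗ[MonoidAlgebra ℤ G] permModZ G H)) x
  rw [hkey]
  rw [LinearMap.smul_apply, LinearMap.id_apply]
end

section
/- Let G be a finite group, N ⊴ G a normal subgroup, H ≤ G with N ⊆ H, and J₁,…,J_ℓ ≤ G. Let π : G → G/N be the projection. Then there is a surjective ℚ[G]-module morphism ⊕ᵢ ℚ[G/Jᵢ]^{nᵢ} → ℚ[G/H] (a generalised norm relation with respect to H and the Jᵢ) if and only if there is a surjective ℚ[G/N]-module morphism ⊕ᵢ ℚ[(G/N)/π(Jᵢ)]^{mᵢ} → ℚ[(G/N)/π(H)]. -/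
open Representation Finsupp

theorem ma_mapDomain_comp {R X Y Z : Type} [Semiring R] (f : X → Y) (g : Y → Z)
    (v : MonoidAlgebra R X) :
    MonoidAlgebra.mapDomain (g ∘ f) v = MonoidAlgebra.mapDomain g (MonoidAlgebra.mapDomain f v) := by
  apply MonoidAlgebra.ext
  exact Finsupp.mapDomain_comp

theorem ma_mapDomain_id {R X : Type} [Semiring R] (v : MonoidAlgebra R X) :
    MonoidAlgebra.mapDomain id v = v := by
  apply MonoidAlgebra.ext
  exact Finsupp.mapDomain_id

theorem ofMulAction_eq_mapDomain {Γ X : Type} [Group Γ] [MulAction Γ X] (g : Γ)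
    (v : MonoidAlgebra ℚ X) :
    Representation.ofMulAction ℚ Γ X g v = MonoidAlgebra.mapDomain (g • ·) v := rfl

section Helpers

variable {G G' : Type} [Group G] [Group G']

/-- Restriction of a representation along a group hom. -/
noncomputable def rcomp {W : Type} [AddCommMonoid W] [Module ℚ W]
    (τ : Representation ℚ G' W) (φ : G →* G') : Representation ℚ G W :=
  MonoidHom.comp τ φ

@[simp] theorem rcomp_apply {W : Type} [AddCommMonoid W] [Module ℚ W]
    (τ : Representation ℚ G' W) (φ : G →* G') (g : G) : rcomp τ φ g = τ (φ g) := rfl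

theorem comp_asAlgebraHom {W : Type} [AddCommMonoid W] [Module ℚ W]
    (τ : Representation ℚ G' W) (φ : G →* G') (a : MonoidAlgebra ℚ G) (x : W) :
    (rcomp τ φ).asAlgebraHom a x
      = τ.asAlgebraHom (MonoidAlgebra.mapDomainRingHom ℚ φ a) x := by
  induction a using MonoidAlgebra.induction with
  | zero => simp
  | single_add g r a _ _ ih =>
    have hs : (MonoidAlgebra.mapDomainRingHom ℚ φ) (MonoidAlgebra.single g r)
        = MonoidAlgebra.single (φ g) r := MonoidAlgebra.mapDomain_single
    rw [map_add, map_add, map_add, LinearMap.add_apply, LinearMap.add_apply, ih, hs,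
      Representation.asAlgebraHom_single, Representation.asAlgebraHom_single]
    rfl

/-- An intertwining `ℚ`-linear map induces a `MonoidAlgebra`-linear map of `asModule`s. -/
noncomputable def permHom {V W : Type} [AddCommMonoid V] [AddCommMonoid W]
    [Module ℚ V] [Module ℚ W]
    (ρ : Representation ℚ G V) (τ : Representation ℚ G W)
    (f : V →ₗ[ℚ] W) (hf : ∀ g : G, f ∘ₗ ρ g = τ g ∘ₗ f) :
    ρ.asModule →ₗ[MonoidAlgebra ℚ G] τ.asModule where
  toFun := f
  map_add' := f.map_add
  map_smul' a x := by
    revert x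
    change ∀ x : V, f (ρ.asAlgebraHom a x) = τ.asAlgebraHom a (f x)
    intro x
    induction a using MonoidAlgebra.induction with
    | zero => simp
    | single_add g r a _ _ ih =>
      rw [map_add, map_add, LinearMap.add_apply, LinearMap.add_apply, map_add, ih,
        Representation.asAlgebraHom_single, Representation.asAlgebraHom_single]
      rw [LinearMap.smul_apply, LinearMap.smul_apply, map_smul]
      congr 1
      exact congrArg (r • ·) (LinearMap.congr_fun (hf g) x)

/-- Restriction of scalars along `φ` for a linear map out of a finite product of `asModule`s. -/
noncomputable def restrictPi (φ : G →* G')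
    {ι : Type} (κ : ι → Type) (W : ι → Type) [∀ i, AddCommMonoid (W i)] [∀ i, Module ℚ (W i)]
    {WH : Type} [AddCommMonoid WH] [Module ℚ WH]
    (τ : ∀ i, Representation ℚ G' (W i)) (τH : Representation ℚ G' WH)
    (F : (∀ i, κ i → (τ i).asModule) →ₗ[MonoidAlgebra ℚ G'] τH.asModule) :
    (∀ i, κ i → (rcomp (τ i) φ).asModule)
      →ₗ[MonoidAlgebra ℚ G] (rcomp τH φ).asModule where
  toFun := F
  map_add' := F.map_add
  map_smul' a x := by
    let x' : ∀ i, κ i → (τ i).asModule := x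
    have h1 : a • x = ((MonoidAlgebra.mapDomainRingHom ℚ φ a) • x' :
        ∀ i, κ i → (τ i).asModule) := by
      funext i j
      exact comp_asAlgebraHom (τ i) φ a (x i j)
    show F (a • x) = (rcomp τH φ).asAlgebraHom a (F x)
    calc F (a • x) = F ((MonoidAlgebra.mapDomainRingHom ℚ φ a) • x') := congrArg F h1
    _ = (MonoidAlgebra.mapDomainRingHom ℚ φ a) • F x' := F.map_smul _ _
    _ = @id τH.asModule ((rcomp τH φ).asAlgebraHom a (F x)) := (comp_asAlgebraHom τH φ a (F x)).symm

/-- A componentwise linear map on a double product. -/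
noncomputable def piMapL {R : Type} [Semiring R] {ι : Type} {κ : ι → Type}
    {M M' : ι → Type} [∀ i, AddCommMonoid (M i)] [∀ i, Module R (M i)]
    [∀ i, AddCommMonoid (M' i)] [∀ i, Module R (M' i)]
    (f : ∀ i, M i →ₗ[R] M' i) :
    (∀ i, κ i → M i) →ₗ[R] (∀ i, κ i → M' i) :=
  LinearMap.pi fun i => LinearMap.pi fun j =>
    (f i) ∘ₗ (LinearMap.proj j) ∘ₗ (LinearMap.proj i)

theorem piMapL_surjective {R : Type} [Semiring R] {ι : Type} {κ : ι → Type}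
    {M M' : ι → Type} [∀ i, AddCommMonoid (M i)] [∀ i, Module R (M i)]
    [∀ i, AddCommMonoid (M' i)] [∀ i, Module R (M' i)]
    (f : ∀ i, M i →ₗ[R] M' i) (hf : ∀ i, Function.Surjective (f i)) :
    Function.Surjective (piMapL (κ := κ) f) := by
  intro y
  refine ⟨fun i j => Function.surjInv (hf i) (y i j), ?_⟩
  funext i j
  exact Function.surjInv_eq (hf i) (y i j)

theorem mapDomain_surj {X Y : Type} (f : X → Y) (hf : Function.Surjective f) :
    Function.Surjective (MonoidAlgebra.mapDomain (R := ℚ) f) := by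
  intro w
  refine ⟨MonoidAlgebra.mapDomain (Function.surjInv hf) w, ?_⟩
  rw [← ma_mapDomain_comp]
  have : f ∘ Function.surjInv hf = id := funext fun y => Function.surjInv_eq hf y
  rw [this, ma_mapDomain_id]

theorem algebraMap_smul_asModule {V : Type} [AddCommMonoid V] [Module ℚ V]
    (ρ : Representation ℚ G V) (r : ℚ) (x : ρ.asModule) :
    (algebraMap ℚ (MonoidAlgebra ℚ G) r) • x = r • x := by
  change ρ.asAlgebraHom (algebraMap ℚ (MonoidAlgebra ℚ G) r) x = r • x
  rw [AlgHom.commutes]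
  rfl

/-- Span of differences of basis vectors in the same fibre of `q`. -/
noncomputable def fibreSpan {X Y : Type} (q : X → Y) : Submodule ℚ (MonoidAlgebra ℚ X) :=
  Submodule.span ℚ
    {w : MonoidAlgebra ℚ X | ∃ x x', q x = q x' ∧ w = MonoidAlgebra.single x 1 - MonoidAlgebra.single x' 1}

theorem sub_section_mem_fibreSpan {X Y : Type} (q : X → Y) (σ : Y → X)
    (hσ : ∀ y, q (σ y) = y) (v : MonoidAlgebra ℚ X) :
    v - MonoidAlgebra.mapDomain σ (MonoidAlgebra.mapDomain q v) ∈ fibreSpan q := by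
  induction v using MonoidAlgebra.induction_linear with
  | zero => simp [fibreSpan, MonoidAlgebra.mapDomain_zero]
  | add f g hf hg =>
    have : f + g - MonoidAlgebra.mapDomain σ (MonoidAlgebra.mapDomain q (f + g))
        = (f - MonoidAlgebra.mapDomain σ (MonoidAlgebra.mapDomain q f))
          + (g - MonoidAlgebra.mapDomain σ (MonoidAlgebra.mapDomain q g)) := by
      rw [MonoidAlgebra.mapDomain_add, MonoidAlgebra.mapDomain_add]
      abel
    rw [this]
    exact Submodule.add_mem _ hf hg
  | single x r =>
    rw [MonoidAlgebra.mapDomain_single, MonoidAlgebra.mapDomain_single]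
    have : MonoidAlgebra.single x r - MonoidAlgebra.single (σ (q x)) r
        = r • (MonoidAlgebra.single x (1:ℚ) - MonoidAlgebra.single (σ (q x)) 1) := by
      rw [smul_sub, MonoidAlgebra.smul_single, MonoidAlgebra.smul_single, smul_eq_mul, mul_one]
    rw [this]
    exact Submodule.smul_mem _ r
      (Submodule.subset_span ⟨x, σ (q x), (hσ (q x)).symm, rfl⟩)

theorem mem_fibreSpan_of_eq_mapDomain {X Y : Type} (q : X → Y) (σ : Y → X)
    (hσ : ∀ y, q (σ y) = y) (A B : MonoidAlgebra ℚ X)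
    (h : MonoidAlgebra.mapDomain q A = MonoidAlgebra.mapDomain q B) : A - B ∈ fibreSpan q := by
  have : A - B = (A - MonoidAlgebra.mapDomain σ (MonoidAlgebra.mapDomain q A))
      - (B - MonoidAlgebra.mapDomain σ (MonoidAlgebra.mapDomain q B)) := by rw [h]; abel
  rw [this]
  exact Submodule.sub_mem _ (sub_section_mem_fibreSpan q σ hσ A)
    (sub_section_mem_fibreSpan q σ hσ B)

theorem pi_double_sum {R : Type} [Semiring R] {ι : Type} [Fintype ι] [DecidableEq ι]
    {κ : ι → Type} [∀ i, Fintype (κ i)] [∀ i, DecidableEq (κ i)]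
    {M : ι → Type} [∀ i, AddCommMonoid (M i)] [∀ i, Module R (M i)]
    (u : ∀ i, κ i → M i) :
    u = ∑ i, ∑ j, Pi.single i (Pi.single j (u i j)) := by
  conv_lhs => rw [← Finset.univ_sum_single u]
  refine Finset.sum_congr rfl fun i _ => ?_
  conv_lhs => rw [← Finset.univ_sum_single (u i)]
  rw [← LinearMap.coe_single (R := R), map_sum]

/-- The natural map `G/K → (G/N)/π(K)`. -/
def qmap (N K : Subgroup G) [N.Normal] :
    G ⧸ K → (G ⧸ N) ⧸ (K.map (QuotientGroup.mk' N)) :=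
  Quotient.map' (QuotientGroup.mk : G → G ⧸ N) (fun a b h => by
    rw [QuotientGroup.leftRel_apply] at h ⊢
    simpa using Subgroup.mem_map_of_mem (QuotientGroup.mk' N) h)

variable (N K : Subgroup G) [N.Normal]

theorem qmap_mk (g : G) :
    qmap N K (QuotientGroup.mk g) = QuotientGroup.mk (QuotientGroup.mk g) := rfl

theorem qmap_surjective : Function.Surjective (qmap N K) := by
  intro y
  induction y using Quotient.inductionOn' with
  | h a =>
    induction a using Quotient.inductionOn' with
    | h g => exact ⟨QuotientGroup.mk g, rfl⟩

theorem qmap_smul (g : G) (x : G ⧸ K) :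
    qmap N K (g • x) = (QuotientGroup.mk g : G ⧸ N) • qmap N K x := by
  induction x using Quotient.inductionOn' with
  | h a => rfl

theorem qmap_eq_iff (x x' : G ⧸ K) :
    qmap N K x = qmap N K x' ↔ ∃ ν ∈ N, x' = ν • x := by
  have hN : N.Normal := inferInstance
  induction x using Quotient.inductionOn' with
  | h a =>
  induction x' using Quotient.inductionOn' with
  | h b =>
  rw [qmap_mk, qmap_mk, QuotientGroup.eq]
  rw [show ((QuotientGroup.mk a : G ⧸ N))⁻¹ * QuotientGroup.mk b
      = QuotientGroup.mk (a⁻¹ * b) from rfl]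
  constructor
  · intro h
    obtain ⟨k, hk, hmk⟩ := Subgroup.mem_map.mp h
    rw [QuotientGroup.mk'_apply, QuotientGroup.eq] at hmk
    refine ⟨a * (a⁻¹ * b * k⁻¹) * a⁻¹, ?_, ?_⟩
    · refine hN.conj_mem _ ?_ a
      have := hN.conj_mem _ hmk k
      convert this using 1
      group
    · show (QuotientGroup.mk b : G ⧸ K) = _
      rw [MulAction.Quotient.smul_mk, QuotientGroup.eq]
      simp only [smul_eq_mul]
      convert K.inv_mem hk using 1
      group
  · rintro ⟨ν, hν, hb⟩
    have hb' : (QuotientGroup.mk b : G ⧸ K) = QuotientGroup.mk (ν * a) :=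
      hb.trans (MulAction.Quotient.smul_mk K ν a)
    rw [QuotientGroup.eq] at hb'
    have hb'' := K.inv_mem hb'
    have hmem : QuotientGroup.mk' N ((b⁻¹ * (ν * a))⁻¹) ∈ K.map (QuotientGroup.mk' N) :=
      Subgroup.mem_map_of_mem _ hb''
    have heq : (QuotientGroup.mk (a⁻¹ * b) : G ⧸ N)
        = QuotientGroup.mk' N ((b⁻¹ * (ν * a))⁻¹) := by
      rw [QuotientGroup.mk'_apply, QuotientGroup.eq]
      have := N.inv_mem (hN.conj_mem _ hν b⁻¹)
      convert this using 1
      group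
    rw [heq]; exact hmem

theorem qmap_injective (H : Subgroup G) (hNH : N ≤ H) :
    Function.Injective (qmap N H) := by
  intro x x' h
  rw [qmap_eq_iff] at h
  obtain ⟨ν, hν, rfl⟩ := h
  induction x using Quotient.inductionOn' with
  | h a =>
  have key : ν • (QuotientGroup.mk a : G ⧸ H) = QuotientGroup.mk a := by
    rw [MulAction.Quotient.smul_mk, QuotientGroup.eq]
    simp only [smul_eq_mul]
    have h2 := hNH (Subgroup.Normal.conj_mem' inferInstance _ (N.inv_mem hν) a)
    convert h2 using 1
    group
  exact key.symm

theorem qmap_intertwine (g : G) :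
    (MonoidAlgebra.mapDomainLinearMap ℚ ℚ (qmap N K)) ∘ₗ (Representation.ofMulAction ℚ G (G ⧸ K)) g
      = (rcomp (Representation.ofMulAction ℚ (G ⧸ N)
          ((G ⧸ N) ⧸ K.map (QuotientGroup.mk' N))) (QuotientGroup.mk' N)) g
        ∘ₗ MonoidAlgebra.mapDomainLinearMap ℚ ℚ (qmap N K) := by
  apply MonoidAlgebra.lhom_ext'
  intro x
  apply LinearMap.ext
  intro b
  simp only [LinearMap.comp_apply, Representation.ofMulAction_single,
    MonoidAlgebra.lsingle_apply, MonoidAlgebra.mapDomainLinearMap_single, rcomp_apply,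
    QuotientGroup.mk'_apply]
  rw [qmap_smul]

end Helpers

/-- The permutation module `ℚ[Γ/K]`, as a module over the group algebra `ℚ[Γ]`. -/
abbrev permMod (Γ : Type) [Group Γ] (K : Subgroup Γ) : Type :=
  (Representation.ofMulAction ℚ Γ (Γ ⧸ K)).asModule

theorem smul_of_singles {G M P : Type} [Group G] [AddCommMonoid M] [AddCommMonoid P]
    [Module (MonoidAlgebra ℚ G) M] [Module (MonoidAlgebra ℚ G) P]
    (f : M → P) (hadd : ∀ x y, f (x + y) = f x + f y)
    (hone : ∀ (c : G) (r : ℚ) (x : M),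
      f (MonoidAlgebra.single c r • x) = MonoidAlgebra.single c r • f x)
    (a : MonoidAlgebra ℚ G) (x : M) : f (a • x) = a • f x := by
  have halg : ∀ r : ℚ, (algebraMap ℚ (MonoidAlgebra ℚ G)) r = MonoidAlgebra.single 1 r := by
    intro r
    rw [MonoidAlgebra.coe_algebraMap]
    simp
  induction a using MonoidAlgebra.induction_on with
  | of g => exact hone g 1 x
  | add a b iha ihb => rw [add_smul, hadd, iha, ihb, add_smul]
  | smul r a ih =>
    rw [Algebra.smul_def, halg, mul_smul, hone, ih, ← mul_smul, ← halg, ← Algebra.smul_def]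

set_option maxHeartbeats 2000000 in
/-- let `N ⊴ G` with `N ⊆ H` and `π : G → G/N` the projection. There is
a surjective `ℚ[G]`-morphism `⊕ᵢ ℚ[G/Jᵢ]^{nᵢ} → ℚ[G/H]` (a generalised norm relation
with respect to `H` and the `Jᵢ`) if and only if there is a surjective
`ℚ[G/N]`-morphism `⊕ᵢ ℚ[(G/N)/π(Jᵢ)]^{mᵢ} → ℚ[(G/N)/π(H)]`. -/
theorem statement13 (G : Type) [Group G] [Finite G]
    (N : Subgroup G) [N.Normal] (H : Subgroup G) (hNH : N ≤ H)
    (ℓ : ℕ) (J : Fin ℓ → Subgroup G) :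
    (∃ (n : Fin ℓ → ℕ)
        (F : (∀ i : Fin ℓ, Fin (n i) → permMod G (J i)) →ₗ[MonoidAlgebra ℚ G] permMod G H),
        Function.Surjective F) ↔
    (∃ (m : Fin ℓ → ℕ)
        (F : (∀ i : Fin ℓ, Fin (m i) → permMod (G ⧸ N) ((J i).map (QuotientGroup.mk' N)))
            →ₗ[MonoidAlgebra ℚ (G ⧸ N)] permMod (G ⧸ N) (H.map (QuotientGroup.mk' N))),
        Function.Surjective F) := by
  constructor
  · rintro ⟨n, F, hF⟩
    classical
    let T := permHom (Representation.ofMulAction ℚ G (G ⧸ H))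
      (rcomp (Representation.ofMulAction ℚ (G ⧸ N) ((G ⧸ N) ⧸ H.map (QuotientGroup.mk' N)))
        (QuotientGroup.mk' N))
      (MonoidAlgebra.mapDomainLinearMap ℚ ℚ (qmap N H)) (qmap_intertwine N H)
    let Φ := T ∘ₗ F
    have hΦ : Function.Surjective Φ := by
      have hT : Function.Surjective T := mapDomain_surj _ (qmap_surjective N H)
      show Function.Surjective ⇑(T ∘ₗ F)
      rw [LinearMap.coe_comp]
      exact hT.comp hF
    let σsec : ∀ i : Fin ℓ, ((G ⧸ N) ⧸ (J i).map (QuotientGroup.mk' N)) → G ⧸ (J i) :=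
      fun i => Function.surjInv (qmap_surjective N (J i))
    have hσ : ∀ i y, qmap N (J i) (σsec i y) = y :=
      fun i => Function.surjInv_eq (qmap_surjective N (J i))
    let E : ∀ (i : Fin ℓ), Fin (n i) →
        (permMod G (J i) →ₗ[MonoidAlgebra ℚ G] ∀ i', Fin (n i') → permMod G (J i')) :=
      fun i j =>
        (LinearMap.single (MonoidAlgebra ℚ G) (fun i' => Fin (n i') → permMod G (J i')) i)
        ∘ₗ (LinearMap.single (MonoidAlgebra ℚ G) (fun _ : Fin (n i) => permMod G (J i)) j)
    have key : ∀ (i : Fin ℓ) (j : Fin (n i)) (v : permMod G (J i)),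
        v ∈ fibreSpan (qmap N (J i)) → Φ (E i j v) = 0 := by
      intro i j v hv
      refine Submodule.span_induction (p := fun w _ => Φ (E i j w) = 0) ?_ ?_ ?_ ?_ hv
      · rintro w ⟨x, x', hqq, rfl⟩
        obtain ⟨ν, hν, rfl⟩ := (qmap_eq_iff N (J i) x x').mp hqq
        erw [map_sub, map_sub]
        have h1 : (MonoidAlgebra.single (ν • x) (1:ℚ) : permMod G (J i))
            = (Representation.ofMulAction ℚ G (G ⧸ J i)).asAlgebraHom
                (MonoidAlgebra.single ν 1) (MonoidAlgebra.single x 1) := by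
          rw [Representation.asAlgebraHom_single_one, Representation.ofMulAction_single]
        rw [h1]
        have h4 : (MonoidAlgebra.single ν (1:ℚ)) • (Φ (E i j (MonoidAlgebra.single x 1)))
            = Φ (E i j (MonoidAlgebra.single x 1)) := by
          show (rcomp (Representation.ofMulAction ℚ (G ⧸ N)
              ((G ⧸ N) ⧸ H.map (QuotientGroup.mk' N))) (QuotientGroup.mk' N)).asAlgebraHom
              (MonoidAlgebra.single ν 1) _ = _
          rw [Representation.asAlgebraHom_single_one, rcomp_apply]
          have hone : QuotientGroup.mk' N ν = 1 := (QuotientGroup.eq_one_iff ν).mpr hν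
          rw [hone, map_one]
          rfl
        have h2 := (Φ.comp (E i j)).map_smul (MonoidAlgebra.single ν (1:ℚ)) (MonoidAlgebra.single x 1)
        simp only [LinearMap.comp_apply] at h2
        have h3 : Φ (E i j ((Representation.ofMulAction ℚ G (G ⧸ J i)).asAlgebraHom
              (MonoidAlgebra.single ν 1) (MonoidAlgebra.single x 1)))
            = Φ (E i j (MonoidAlgebra.single x 1)) := h2.trans h4
        rw [h3, sub_self]
      · simp
      · intro y z _ _ ihy ihz
        rw [map_add, map_add, ihy, ihz, add_zero]
      · intro r y _ ih
        have hr : (r • y : permMod G (J i)) = (algebraMap ℚ (MonoidAlgebra ℚ G) r) • y :=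
          (algebraMap_smul_asModule _ r y).symm
        change Φ (E i j (@HSMul.hSMul ℚ (permMod G (J i)) (permMod G (J i)) _ r y)) = 0
        rw [hr, map_smul, map_smul, ih, smul_zero]
    have hker : ∀ u w : (∀ i', Fin (n i') → permMod G (J i')),
        (∀ i j, u i j - w i j ∈ fibreSpan (qmap N (J i))) → Φ u = Φ w := by
      intro u w h
      have hsum : u - w = ∑ i, ∑ j, Pi.single i (Pi.single j ((u - w) i j)) :=
        pi_double_sum (R := MonoidAlgebra ℚ G) (u - w)
      have h0 : Φ (u - w) = 0 := by
        rw [hsum, map_sum]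
        refine Finset.sum_eq_zero fun i _ => ?_
        rw [map_sum]
        refine Finset.sum_eq_zero fun j _ => ?_
        exact key i j _ (h i j)
      rw [map_sub] at h0
      exact sub_eq_zero.mp h0
    have hsingle : ∀ (c : G ⧸ N) (r : ℚ)
        (x : ∀ i, Fin (n i) → permMod (G ⧸ N) ((J i).map (QuotientGroup.mk' N))),
        Φ (fun i j => MonoidAlgebra.mapDomain (σsec i) ((MonoidAlgebra.single c r • x) i j))
          = (Representation.ofMulAction ℚ (G ⧸ N)
              ((G ⧸ N) ⧸ H.map (QuotientGroup.mk' N))).asAlgebraHom (MonoidAlgebra.single c r)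
              (Φ (fun i j => MonoidAlgebra.mapDomain (σsec i) (x i j))) := by
      intro c r x
      obtain ⟨g, rfl⟩ := QuotientGroup.mk'_surjective N c
      let sx : ∀ i', Fin (n i') → permMod G (J i') :=
        fun i' j' => MonoidAlgebra.mapDomain (σsec i') (x i' j')
      have step1 : Φ (fun i j =>
            MonoidAlgebra.mapDomain (σsec i) ((MonoidAlgebra.single (QuotientGroup.mk' N g) r • x) i j))
          = Φ ((MonoidAlgebra.single g r : MonoidAlgebra ℚ G) • sx) := by
        apply hker
        intro i j
        have hu : MonoidAlgebra.mapDomain (σsec i)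
              ((MonoidAlgebra.single (QuotientGroup.mk' N g) r • x) i j)
            = r • MonoidAlgebra.mapDomain
                (fun y => σsec i ((QuotientGroup.mk' N g : G ⧸ N) • y)) (x i j) := by
          show MonoidAlgebra.mapDomain (σsec i)
              ((Representation.ofMulAction ℚ (G ⧸ N)
                ((G ⧸ N) ⧸ (J i).map (QuotientGroup.mk' N))).asAlgebraHom
                (MonoidAlgebra.single (QuotientGroup.mk' N g) r) (x i j)) = _
          erw [Representation.asAlgebraHom_single, LinearMap.smul_apply, MonoidAlgebra.mapDomain_smul]
          congr 1
          erw [ofMulAction_eq_mapDomain, ← ma_mapDomain_comp]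
          rfl
        have hw : ((MonoidAlgebra.single g r : MonoidAlgebra ℚ G) • sx) i j
            = r • MonoidAlgebra.mapDomain (fun y => g • σsec i y) (x i j) := by
          show (Representation.ofMulAction ℚ G (G ⧸ J i)).asAlgebraHom (MonoidAlgebra.single g r)
              (MonoidAlgebra.mapDomain (σsec i) (x i j)) = _
          rw [Representation.asAlgebraHom_single, LinearMap.smul_apply]
          congr 1
          erw [ofMulAction_eq_mapDomain, ← ma_mapDomain_comp]
          rfl
        erw [hu, hw, ← smul_sub]
        refine Submodule.smul_mem _ r ?_
        refine mem_fibreSpan_of_eq_mapDomain (qmap N (J i)) (σsec i) (hσ i) _ _ ?_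
        erw [← ma_mapDomain_comp, ← ma_mapDomain_comp]
        congr 1
        funext y
        show qmap N (J i) (σsec i ((QuotientGroup.mk' N g : G ⧸ N) • y))
            = qmap N (J i) (g • σsec i y)
        rw [hσ i, qmap_smul, hσ i]
        rfl
      rw [step1, Φ.map_smul]
      show (rcomp (Representation.ofMulAction ℚ (G ⧸ N)
          ((G ⧸ N) ⧸ H.map (QuotientGroup.mk' N))) (QuotientGroup.mk' N)).asAlgebraHom
          (MonoidAlgebra.single g r) (Φ (fun i j => MonoidAlgebra.mapDomain (σsec i) (x i j))) = _
      refine (comp_asAlgebraHom _ _ _ _).trans ?_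
      have hms : (MonoidAlgebra.mapDomainRingHom ℚ (QuotientGroup.mk' N)) (MonoidAlgebra.single g r)
          = MonoidAlgebra.single (QuotientGroup.mk' N g) r := MonoidAlgebra.mapDomain_single
      exact LinearMap.congr_fun (congrArg _ hms) _
    let Fbar : (∀ i, Fin (n i) → permMod (G ⧸ N) ((J i).map (QuotientGroup.mk' N)))
        → permMod (G ⧸ N) (H.map (QuotientGroup.mk' N)) :=
      fun x => Φ (fun i j => MonoidAlgebra.mapDomain (σsec i) (x i j))
    have haddF : ∀ x y, Fbar (x + y) = Fbar x + Fbar y := by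
      intro x y
      show Φ (fun i j => MonoidAlgebra.mapDomain (σsec i) ((x + y) i j))
          = Φ (fun i j => MonoidAlgebra.mapDomain (σsec i) (x i j))
            + Φ (fun i j => MonoidAlgebra.mapDomain (σsec i) (y i j))
      refine Eq.trans ?_ (map_add Φ _ _)
      congr 1
      funext i j
      exact MonoidAlgebra.mapDomain_add _ _ _
    have honeF : ∀ (c : G ⧸ N) (r : ℚ) x,
        Fbar (MonoidAlgebra.single c r • x) = MonoidAlgebra.single c r • Fbar x :=
      fun c r x => hsingle c r x
    refine ⟨n, { toFun := Fbar, map_add' := haddF,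
                 map_smul' := fun a x => smul_of_singles Fbar haddF honeF a x }, ?_⟩
    · intro y
      obtain ⟨u, hu⟩ := hΦ y
      refine ⟨fun i j => MonoidAlgebra.mapDomain (qmap N (J i)) (u i j), ?_⟩
      show Φ (fun i j =>
          MonoidAlgebra.mapDomain (σsec i) (MonoidAlgebra.mapDomain (qmap N (J i)) (u i j))) = y
      rw [← hu]
      apply hker
      intro i j
      have h2 := Submodule.neg_mem _
        (sub_section_mem_fibreSpan (qmap N (J i)) (σsec i) (hσ i) (u i j))
      erw [neg_sub] at h2
      exact h2
  · rintro ⟨m, F, hF⟩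
    have hbij : Function.Bijective (qmap N H) :=
      ⟨qmap_injective N H hNH, qmap_surjective N H⟩
    let e : G ⧸ H ≃ (G ⧸ N) ⧸ H.map (QuotientGroup.mk' N) := Equiv.ofBijective _ hbij
    have hesymm : ∀ (g : G) (y), e.symm ((QuotientGroup.mk g : G ⧸ N) • y) = g • e.symm y := by
      intro g y
      apply hbij.injective
      calc qmap N H (e.symm ((QuotientGroup.mk g : G ⧸ N) • y))
          = e (e.symm ((QuotientGroup.mk g : G ⧸ N) • y)) := rfl
        _ = (QuotientGroup.mk g : G ⧸ N) • y := e.apply_symm_apply _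
        _ = (QuotientGroup.mk g : G ⧸ N) • (e (e.symm y)) := by rw [e.apply_symm_apply]
        _ = qmap N H (g • e.symm y) := (qmap_smul N H g (e.symm y)).symm
    let T := permHom
      (rcomp (Representation.ofMulAction ℚ (G ⧸ N) ((G ⧸ N) ⧸ H.map (QuotientGroup.mk' N)))
        (QuotientGroup.mk' N))
      (Representation.ofMulAction ℚ G (G ⧸ H)) (MonoidAlgebra.mapDomainLinearMap ℚ ℚ e.symm) (by
        intro g
        apply MonoidAlgebra.lhom_ext'
        intro y
        apply LinearMap.ext
        intro b
        simp only [LinearMap.comp_apply, MonoidAlgebra.lsingle_apply, MonoidAlgebra.mapDomainLinearMap_single,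
          rcomp_apply, QuotientGroup.mk'_apply, Representation.ofMulAction_single]
        rw [hesymm g y])
    refine ⟨m, T ∘ₗ (restrictPi (QuotientGroup.mk' N) (fun i => Fin (m i)) _
      (fun i => Representation.ofMulAction ℚ (G ⧸ N) ((G ⧸ N) ⧸ (J i).map (QuotientGroup.mk' N)))
      (Representation.ofMulAction ℚ (G ⧸ N) ((G ⧸ N) ⧸ H.map (QuotientGroup.mk' N))) F)
      ∘ₗ piMapL (fun i => permHom (Representation.ofMulAction ℚ G (G ⧸ J i))
        (rcomp (Representation.ofMulAction ℚ (G ⧸ N) ((G ⧸ N) ⧸ (J i).map (QuotientGroup.mk' N)))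
          (QuotientGroup.mk' N))
        (MonoidAlgebra.mapDomainLinearMap ℚ ℚ (qmap N (J i))) (qmap_intertwine N (J i))), ?_⟩
    rw [LinearMap.coe_comp, LinearMap.coe_comp]
    refine Function.Surjective.comp ?_ (Function.Surjective.comp ?_ ?_)
    · exact mapDomain_surj _ e.symm.surjective
    · exact hF
    · exact piMapL_surjective _ (fun i => mapDomain_surj _ (qmap_surjective N (J i)))
end
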